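/- arXiv:2405.14090 — 3 statements merged into one kernel-verified Lean document; each statement's English description precedes it below -/
import Mathlib

section
/- Let n > C ≥ 1 and let S ⊆ {1,...,n} with |S| = C+1, with weights w'_j = 1/(C+1) for j ∈ S and w'_j = 1/C otherwise. Then the maximum of ∑_j x_j over x ∈ {0,1}^n satisfying ∑_j w'_j x_j ≤ 1 equals C+1, and it is attained uniquely at the indicator vector of S. -/
/-!
Write a 0/1 vector as the indicator of a set `T`, and split `T` into `a` elements of `S`
(weight `1/(C+1)`) and `b` elements outside `S` (weight `1/C`). Clearing denominators in the
constraint gives `(a + b) C + b ≤ C (C + 1)`, so `a + b ≤ C + 1`, and equality forces `b = 0`,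
i.e. `T ⊆ S`; as `|S| = C + 1`, then `T = S`.
-/

open Finset

section Indicator

variable {ι R : Type*} [Fintype ι] [DecidableEq ι] [Semiring R]

lemma exists_finset_eq_ite_mem_of_forall_eq_zero_or_eq_one {x : ι → R}
    (hx : ∀ j, x j = 0 ∨ x j = 1) : ∃ T : Finset ι, x = fun j => if j ∈ T then 1 else 0 := by
  classical
  refine ⟨univ.filter (x · = 1), funext fun j => ?_⟩
  by_cases h : x j = 1
  · simp [h]
  · simp [(hx j).resolve_right h]

lemma sum_ite_mem_one (T : Finset ι) : ∑ j, (if j ∈ T then (1 : R) else 0) = T.card := by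
  simp

lemma sum_mul_ite_mem_one (w : ι → R) (T : Finset ι) :
    ∑ j, w j * (if j ∈ T then 1 else 0) = ∑ j ∈ T, w j := by
  simp [sum_ite_mem]

end Indicator

lemma sum_eq_card_inter_mul_add_card_sdiff_mul {ι R : Type*} [DecidableEq ι] [Semiring R]
    {w : ι → R} {S : Finset ι} {p q : R}
    (hw : ∀ j, w j = if j ∈ S then p else q) (T : Finset ι) :
    ∑ j ∈ T, w j = (T ∩ S).card * p + (T \ S).card * q := by
  rw [← sum_inter_add_sum_sdiff T S w,
    sum_congr rfl fun j hj => (hw j).trans (if_pos (mem_inter.mp hj).2),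
    sum_congr rfl fun j hj => (hw j).trans (if_neg (mem_sdiff.mp hj).2)]
  simp

lemma add_le_succ_of_div_succ_add_div_le_one {a b C : ℕ} (hC : 0 < C)
    (h : (a : ℝ) / (C + 1) + b / C ≤ 1) : a + b ≤ C + 1 ∧ (a + b = C + 1 → b = 0) := by
  have hC' : (0 : ℝ) < C := by exact_mod_cast hC
  rw [div_add_div _ _ (by positivity) hC'.ne', div_le_one (by positivity)] at h
  have cleared : (a + b) * C + b ≤ C * (C + 1) := by
    exact_mod_cast (by linarith : ((a : ℝ) + b) * C + b ≤ C * (C + 1))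
  have hle : a + b ≤ C + 1 := le_of_mul_le_mul_right (by nlinarith) hC
  exact ⟨hle, fun heq => by rw [heq] at cleared; nlinarith⟩

lemma card_le_of_div_succ_add_div_le_one {ι : Type*} [DecidableEq ι] {S T : Finset ι} {C : ℕ}
    (hC : 0 < C) (hS : S.card = C + 1)
    (h : ((T ∩ S).card : ℝ) / (C + 1) + (T \ S).card / C ≤ 1) :
    T.card ≤ C + 1 ∧ (T.card = C + 1 → T = S) := by
  have hsplit := card_inter_add_card_sdiff T S
  obtain ⟨hle, heq⟩ := add_le_succ_of_div_succ_add_div_le_one hC h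
  refine ⟨hsplit ▸ hle, fun hT => ?_⟩
  have hsub : T ⊆ S := sdiff_eq_empty_iff_subset.mp (card_eq_zero.mp (heq (hsplit.trans hT)))
  exact eq_of_subset_of_card_le hsub (by omega)

theorem stmt_2_general (n C : ℕ) (hC : 1 ≤ C)
    (S : Finset (Fin n)) (hS : S.card = C + 1)
    (w' : Fin n → ℝ)
    (hw' : ∀ j, w' j = if j ∈ S then 1 / ((C : ℝ) + 1) else 1 / (C : ℝ)) :
    (∑ j, w' j * (if j ∈ S then (1 : ℝ) else 0)) ≤ 1 ∧
    (∑ j, (if j ∈ S then (1 : ℝ) else 0)) = (C : ℝ) + 1 ∧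
    (∀ x : Fin n → ℝ, (∀ j, x j = 0 ∨ x j = 1) → (∑ j, w' j * x j) ≤ 1 →
      (∑ j, x j) ≤ (C : ℝ) + 1 ∧
      ((∑ j, x j) = (C : ℝ) + 1 → x = fun j => if j ∈ S then (1 : ℝ) else 0)) := by
  have weight_sum (T : Finset (Fin n)) : ∑ j, w' j * (if j ∈ T then 1 else 0) =
      ((T ∩ S).card : ℝ) / (C + 1) + (T \ S).card / C := by
    simp only [sum_mul_ite_mem_one, sum_eq_card_inter_mul_add_card_sdiff_mul hw', mul_one_div]
  refine ⟨?_, by rw [sum_ite_mem_one, hS]; push_cast; rfl, fun x hx hfeas => ?_⟩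
  · have hC' : (0 : ℝ) < C + 1 := by positivity
    rw [weight_sum, inter_self, sdiff_self, hS]
    simp [hC'.ne']
  · obtain ⟨T, rfl⟩ := exists_finset_eq_ite_mem_of_forall_eq_zero_or_eq_one hx
    rw [weight_sum] at hfeas
    obtain ⟨hle, heq⟩ := card_le_of_div_succ_add_div_le_one hC hS hfeas
    rw [sum_ite_mem_one]
    exact ⟨by exact_mod_cast hle, fun h => by rw [heq (by exact_mod_cast h)]⟩

/-- the maximum of the all-ones objective under the perturbed constraint is C+1,
attained uniquely at the indicator vector of S. -/
theorem stmt_2 (n C : ℕ) (hC : 1 ≤ C) (hn : C < n)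
    (S : Finset (Fin n)) (hS : S.card = C + 1)
    (w' : Fin n → ℝ)
    (hw' : ∀ j, w' j = if j ∈ S then 1 / ((C : ℝ) + 1) else 1 / (C : ℝ)) :
    (∑ j, w' j * (if j ∈ S then (1 : ℝ) else 0)) ≤ 1 ∧
    (∑ j, (if j ∈ S then (1 : ℝ) else 0)) = (C : ℝ) + 1 ∧
    (∀ x : Fin n → ℝ, (∀ j, x j = 0 ∨ x j = 1) → (∑ j, w' j * x j) ≤ 1 →
      (∑ j, x j) ≤ (C : ℝ) + 1 ∧
      ((∑ j, x j) = (C : ℝ) + 1 → x = fun j => if j ∈ S then (1 : ℝ) else 0)) :=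
  stmt_2_general n C hC S hS w' hw'
end

section
/- Let n > C ≥ 1, and consider the uniform-weight instance w_j = 1/C on {0,1}^n and, for each S ⊆ {1,...,n} with |S| = C+1, the perturbed instance w^S with w^S_j = 1/(C+1) for j ∈ S and 1/C otherwise. A vector x ∈ {0,1}^n satisfies the constraint ∑_j w^S_j x_j ≤ 1 but violates ∑_j w_j x_j ≤ 1 if and only if x is the indicator vector of S. In particular, the feasible set of w^S equals the feasible set of w together with exactly one additional point. -/
/-!
Identify a binary vector with its support `T`. Scaled by `C (C + 1)`, the load of `T` under `w^S` is
`C |T| + |T \ S|`, while `T` is infeasible for `w` exactly when `|T| ≥ C + 1`. Both together force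
`|T \ S| = 0`, i.e. `T ⊆ S`, and then `|T| ≥ |S|` gives `T = S`.
-/

open Finset

lemma exists_eq_ite_mem_of_binary {ι : Type*} [Fintype ι] [DecidableEq ι] {x : ι → ℝ}
    (hx : ∀ j, x j = 0 ∨ x j = 1) : ∃ T : Finset ι, x = fun j => if j ∈ T then 1 else 0 := by
  classical
  refine ⟨univ.filter (x · = 1), funext fun j => ?_⟩
  rcases hx j with h | h <;> simp [h]

lemma ite_mem_one_zero_inj {ι : Type*} [DecidableEq ι] {S T : Finset ι} :
    ((fun j => if j ∈ T then (1 : ℝ) else 0) = fun j => if j ∈ S then 1 else 0) ↔ T = S := by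
  refine ⟨fun h => ext fun j => ?_, fun h => h ▸ rfl⟩
  have := congrFun h j
  by_cases hT : j ∈ T <;> by_cases hS : j ∈ S <;> simp [hT, hS] at this ⊢

section Load

variable {ι : Type*} [Fintype ι] [DecidableEq ι]

lemma sum_mul_ite_mem (f : ι → ℝ) (T : Finset ι) :
    ∑ j, f j * (if j ∈ T then 1 else 0) = ∑ j ∈ T, f j := by
  simp only [mul_ite, mul_one, mul_zero, sum_ite_mem, univ_inter]

lemma uniform_load_le_one_iff {C : ℕ} (hC : 0 < C) (T : Finset ι) :
    ∑ j, 1 / (C : ℝ) * (if j ∈ T then 1 else 0) ≤ 1 ↔ #T ≤ C := by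
  have hC' : (0 : ℝ) < C := by exact_mod_cast hC
  rw [sum_mul_ite_mem, sum_const, nsmul_eq_mul, mul_one_div, div_le_one hC']
  exact_mod_cast Iff.rfl

lemma perturbed_load_le_one_iff {C : ℕ} (hC : 0 < C) (S T : Finset ι) :
    ∑ j, (if j ∈ S then 1 / ((C : ℝ) + 1) else 1 / C) * (if j ∈ T then 1 else 0) ≤ 1 ↔
      C * #T + #(T \ S) ≤ C * (C + 1) := by
  have hC' : (0 : ℝ) < C := by exact_mod_cast hC
  have hload : (#(T ∩ S) : ℝ) * (1 / (C + 1)) + #(T \ S) * (1 / C) =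
      (C * (#(T ∩ S) + #(T \ S)) + #(T \ S)) / (C * (C + 1)) := by
    field_simp
    ring
  rw [sum_mul_ite_mem, sum_ite, filter_mem_eq_inter, filter_notMem_eq_sdiff, sum_const, sum_const,
    nsmul_eq_mul, nsmul_eq_mul, hload, div_le_one (by positivity), ← card_inter_add_card_sdiff T S]
  exact_mod_cast Iff.rfl

end Load

lemma mul_card_add_card_sdiff_le_iff {ι : Type*} [DecidableEq ι] {C : ℕ} {S : Finset ι}
    (hS : #S = C + 1) (T : Finset ι) :
    C * #T + #(T \ S) ≤ C * (C + 1) ↔ #T ≤ C ∨ T = S := by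
  constructor
  · intro h
    refine (le_or_gt #T C).imp_right fun hT => ?_
    have hsdiff : #(T \ S) = 0 := by nlinarith
    exact eq_of_subset_of_card_le (sdiff_eq_empty_iff_subset.mp (card_eq_zero.mp hsdiff))
      (by omega)
  · rintro (hT | rfl)
    · have := card_le_card (sdiff_subset (s := T) (t := S))
      nlinarith
    · simp [hS]

theorem stmt_3_general (n C : ℕ) (hC : 1 ≤ C)
    (S : Finset (Fin n)) (hS : S.card = C + 1)
    (w wS : Fin n → ℝ)
    (hw : ∀ j, w j = 1 / (C : ℝ))
    (hwS : ∀ j, wS j = if j ∈ S then 1 / ((C : ℝ) + 1) else 1 / (C : ℝ)) :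
    (∀ x : Fin n → ℝ, (∀ j, x j = 0 ∨ x j = 1) →
      (((∑ j, wS j * x j) ≤ 1 ∧ ¬ (∑ j, w j * x j) ≤ 1) ↔
        x = fun j => if j ∈ S then (1 : ℝ) else 0)) ∧
    {x : Fin n → ℝ | (∀ j, x j = 0 ∨ x j = 1) ∧ (∑ j, wS j * x j) ≤ 1} =
      {x : Fin n → ℝ | (∀ j, x j = 0 ∨ x j = 1) ∧ (∑ j, w j * x j) ≤ 1} ∪
        {fun j => if j ∈ S then (1 : ℝ) else 0} ∧
    (fun j => if j ∈ S then (1 : ℝ) else 0) ∉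
      {x : Fin n → ℝ | (∀ j, x j = 0 ∨ x j = 1) ∧ (∑ j, w j * x j) ≤ 1} := by
  obtain rfl : w = fun _ => 1 / (C : ℝ) := funext hw
  obtain rfl : wS = fun j => if j ∈ S then 1 / ((C : ℝ) + 1) else 1 / (C : ℝ) := funext hwS
  have feasible_iff (T : Finset (Fin n)) :
      ∑ j, (if j ∈ S then 1 / ((C : ℝ) + 1) else 1 / C) * (if j ∈ T then 1 else 0) ≤ 1 ↔
        ∑ j, 1 / (C : ℝ) * (if j ∈ T then 1 else 0) ≤ 1 ∨
          (fun j => if j ∈ T then (1 : ℝ) else 0) = fun j => if j ∈ S then 1 else 0 := by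
    rw [perturbed_load_le_one_iff hC, uniform_load_le_one_iff hC, ite_mem_one_zero_inj]
    exact mul_card_add_card_sdiff_le_iff hS T
  have indicator_infeasible : ¬ ∑ j, 1 / (C : ℝ) * (if j ∈ S then 1 else 0) ≤ 1 := by
    rw [uniform_load_le_one_iff hC]
    omega
  refine ⟨fun x hx => ?_, ?_, fun h => indicator_infeasible h.2⟩
  · obtain ⟨T, rfl⟩ := exists_eq_ite_mem_of_binary hx
    rw [feasible_iff]
    constructor
    · rintro ⟨h | h, h'⟩
      exacts [absurd h h', h]
    · intro h
      rw [h]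
      exact ⟨Or.inr rfl, indicator_infeasible⟩
  · ext x
    simp only [Set.mem_union, Set.mem_ofPred_eq, Set.mem_singleton_iff]
    constructor
    · rintro ⟨hx, h⟩
      obtain ⟨T, rfl⟩ := exists_eq_ite_mem_of_binary hx
      exact ((feasible_iff T).1 h).imp_left fun h => ⟨hx, h⟩
    · rintro (⟨hx, h⟩ | rfl)
      · obtain ⟨T, rfl⟩ := exists_eq_ite_mem_of_binary hx
        exact ⟨hx, (feasible_iff T).2 (Or.inl h)⟩
      · exact ⟨fun j => by dsimp only; split_ifs <;> simp, (feasible_iff S).2 (Or.inr rfl)⟩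

/-- a binary vector is feasible for the perturbed instance w^S but infeasible for
the uniform instance w iff it is the indicator of S; hence the feasible set of w^S is the
feasible set of w plus exactly one additional point. -/
theorem stmt_3 (n C : ℕ) (hC : 1 ≤ C) (hn : C < n)
    (S : Finset (Fin n)) (hS : S.card = C + 1)
    (w wS : Fin n → ℝ)
    (hw : ∀ j, w j = 1 / (C : ℝ))
    (hwS : ∀ j, wS j = if j ∈ S then 1 / ((C : ℝ) + 1) else 1 / (C : ℝ)) :
    (∀ x : Fin n → ℝ, (∀ j, x j = 0 ∨ x j = 1) →
      (((∑ j, wS j * x j) ≤ 1 ∧ ¬ (∑ j, w j * x j) ≤ 1) ↔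
        x = fun j => if j ∈ S then (1 : ℝ) else 0)) ∧
    {x : Fin n → ℝ | (∀ j, x j = 0 ∨ x j = 1) ∧ (∑ j, wS j * x j) ≤ 1} =
      {x : Fin n → ℝ | (∀ j, x j = 0 ∨ x j = 1) ∧ (∑ j, w j * x j) ≤ 1} ∪
        {fun j => if j ∈ S then (1 : ℝ) else 0} ∧
    (fun j => if j ∈ S then (1 : ℝ) else 0) ∉
      {x : Fin n → ℝ | (∀ j, x j = 0 ∨ x j = 1) ∧ (∑ j, w j * x j) ≤ 1} :=
  stmt_3_general n C hC S hS w wS hw hwS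
end

section
/- For ε ∈ (0,1) and C = ⌈1/ε⌉ - 1, in the uniform instance w_j = 1/C on {0,1}^n (n > C), any feasible x (i.e., ∑_j x_j/C ≤ 1) has objective ∑_j x_j ≤ C, and C < (1-ε)(C+1) fails, i.e., C ≥ (1-ε)(C+1); moreover for the perturbed instance w^S with optimum C+1 = ⌈1/ε⌉, a feasible solution x has value at least (1-ε)(C+1) only if x is the indicator of S or ∑_j x_j = C with C ≥ (1-ε)(C+1). -/
/-- with C = ⌈1/ε⌉ - 1, any feasible solution of the uniform instance has value
at most C, C ≥ (1-ε)(C+1), and any feasible solution of the perturbed instance with value at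
least (1-ε)(C+1) is either the indicator of S, or has value C with C ≥ (1-ε)(C+1). -/
theorem stmt_4 (ε : ℝ) (hε : ε ∈ Set.Ioo (0 : ℝ) 1) (C n : ℕ)
    (hCdef : C = ⌈1 / ε⌉₊ - 1) (hC : 1 ≤ C) (hn : C < n)
    (S : Finset (Fin n)) (hS : S.card = C + 1)
    (w wS : Fin n → ℝ)
    (hw : ∀ j, w j = 1 / (C : ℝ))
    (hwS : ∀ j, wS j = if j ∈ S then 1 / ((C : ℝ) + 1) else 1 / (C : ℝ)) :
    (∀ x : Fin n → ℝ, (∀ j, x j = 0 ∨ x j = 1) → (∑ j, w j * x j) ≤ 1 →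
      (∑ j, x j) ≤ (C : ℝ)) ∧
    ((1 - ε) * ((C : ℝ) + 1) ≤ (C : ℝ)) ∧
    (∀ x : Fin n → ℝ, (∀ j, x j = 0 ∨ x j = 1) → (∑ j, wS j * x j) ≤ 1 →
      (1 - ε) * ((C : ℝ) + 1) ≤ (∑ j, x j) →
      (x = fun j => if j ∈ S then (1 : ℝ) else 0) ∨
        ((∑ j, x j) = (C : ℝ) ∧ (1 - ε) * ((C : ℝ) + 1) ≤ (C : ℝ))) := by
  obtain ⟨hε0, hε1⟩ := hε
  have hC1 : (1:ℝ) ≤ (C:ℝ) := by exact_mod_cast hC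
  have hCpos : (0:ℝ) < (C:ℝ) := by linarith
  have hC1pos : (0:ℝ) < (C:ℝ) + 1 := by linarith
  have hceil : C + 1 = ⌈1 / ε⌉₊ := by omega
  have hle : 1 / ε ≤ (C:ℝ) + 1 := by
    have h := Nat.le_ceil (1 / ε)
    rw [← hceil] at h; push_cast at h; linarith
  have hlt : (C:ℝ) < 1 / ε := by
    have h : C < ⌈1 / ε⌉₊ := by omega
    exact_mod_cast Nat.lt_ceil.mp h
  have hεC1 : 1 ≤ ε * ((C:ℝ) + 1) := by
    rw [div_le_iff₀ hε0] at hle; linarith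
  have part2 : (1 - ε) * ((C : ℝ) + 1) ≤ (C : ℝ) := by nlinarith
  have hεC : ε * (C:ℝ) < 1 := by
    rw [lt_div_iff₀ hε0] at hlt; linarith
  refine ⟨?_, part2, ?_⟩
  · intro x hx hfeas
    have heq : ∑ j, w j * x j = (1 / (C:ℝ)) * ∑ j, x j := by
      rw [Finset.mul_sum]
      exact Finset.sum_congr rfl fun j _ => by rw [hw j]
    rw [heq, one_div, inv_mul_le_iff₀ hCpos, mul_one] at hfeas
    exact hfeas
  · intro x hx hfeas hval
    set T := Finset.univ.filter (fun j => x j = 1) with hT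
    have hmemT : ∀ j, j ∈ T ↔ x j = 1 := fun j => by simp [hT]
    have hxT : ∀ j, x j = if j ∈ T then 1 else 0 := by
      intro j
      rcases hx j with h | h
      · rw [h, if_neg]; rw [hmemT, h]; norm_num
      · rw [h, if_pos ((hmemT j).mpr h)]
    have hsum_card : ∀ (U : Finset (Fin n)), ∑ j ∈ U, x j = (((U ∩ T).card : ℕ) : ℝ) := by
      intro U
      rw [Finset.sum_congr rfl (fun j _ => hxT j), Finset.sum_ite_mem]
      simp
    set a := (T ∩ S).card with ha
    set b := (T \ S).card with hb
    set N := T.card with hN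
    have hab : a + b = N := Finset.card_inter_add_card_sdiff T S
    have hSa : S ∩ T = T ∩ S := Finset.inter_comm S T
    have hSb : Sᶜ ∩ T = T \ S := by ext j; simp [and_comm]
    have hvalN : ∑ j, x j = (N : ℝ) := by
      rw [hsum_card Finset.univ, Finset.univ_inter]
    have hsplit : ∑ j, wS j * x j = (a:ℝ)/((C:ℝ)+1) + (b:ℝ)/(C:ℝ) := by
      rw [← Finset.sum_add_sum_compl S]
      congr 1
      · rw [Finset.sum_congr rfl (fun j hj => by rw [hwS j, if_pos hj]),
          ← Finset.mul_sum, hsum_card S, hSa, one_div, inv_mul_eq_div]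
      · rw [Finset.sum_congr rfl (fun j hj => by
            rw [hwS j, if_neg (Finset.mem_compl.mp hj)]),
          ← Finset.mul_sum, hsum_card Sᶜ, hSb, one_div, inv_mul_eq_div]
    rw [hsplit] at hfeas
    rw [hvalN] at hval ⊢
    have haS : a ≤ C + 1 := hS ▸ Finset.card_le_card Finset.inter_subset_right
    have hNC : C ≤ N := by
      by_contra hcon
      push_neg at hcon
      have h1 : (N:ℝ) ≤ (C:ℝ) - 1 := by
        have : N + 1 ≤ C := hcon
        have := (Nat.cast_le (α := ℝ)).mpr this
        push_cast at this; linarith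
      nlinarith
    have hanneg : (0:ℝ) ≤ (a:ℝ) := Nat.cast_nonneg a
    rcases Nat.eq_zero_or_pos b with hb0 | hb1
    · -- T ⊆ S
      have hTS : T ⊆ S := by
        rw [← Finset.sdiff_eq_empty_iff_subset]
        exact Finset.card_eq_zero.mp (hb ▸ hb0)
      have hNa : N = a := by omega
      rcases Nat.lt_or_ge N (C + 1) with hlt' | hge'
      · right
        have : N = C := by omega
        rw [this]
        exact ⟨rfl, part2⟩
      · left
        have hTeq : T = S := Finset.eq_of_subset_of_card_le hTS (by omega)
        funext j
        rw [hxT j, hTeq]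
    · -- b ≥ 1
      right
      have hb1' : (1:ℝ) ≤ (b:ℝ) := by exact_mod_cast hb1
      have key : (a:ℝ) * C + (b:ℝ) * ((C:ℝ)+1) ≤ (C:ℝ) * ((C:ℝ)+1) := by
        rw [div_add_div _ _ (ne_of_gt hC1pos) (ne_of_gt hCpos),
          div_le_one (by positivity)] at hfeas
        nlinarith
      have hablt : (a:ℝ) + (b:ℝ) < (C:ℝ) + 1 := by nlinarith
      have hNle : N ≤ C := by
        have : (N:ℝ) < (C:ℝ) + 1 := by
          rw [← hab]; push_cast; linarith
        have : N < C + 1 := by exact_mod_cast (by push_cast; linarith : (N:ℝ) < ((C+1 : ℕ):ℝ))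
        omega
      have : N = C := by omega
      rw [this]
      exact ⟨rfl, part2⟩
end
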